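/- Uniform weighted Taylor remainder (from the proof of Lemma 5.1). Let r : ℝ → ℂ be a Schwartz-class function, let N ≥ 2 be an integer, and let K > 0. Define ρ(k) = (k−i)^{4N+7} r(k) for k ∈ ℝ, and for k₀ ∈ [0,K] define f(k₀, k) := r(k) − (k−i)^{−(4N+7)} Σ_{j=0}^{4N+3} ρ^{(j)}(k₀) (k−k₀)^j / j! for k ∈ ℝ. Then there is a constant C > 0 such that for every k₀ ∈ [0,K], every real k, and every n = 0, 1, …, N+1: |∂_k^n f(k₀,k)| ≤ C |k−k₀|^{4N+4−n} whenever |k−k₀| ≤ 1, and |∂_k^n f(k₀,k)| ≤ C (1+|k|)^{−4} for all real k. -/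

import Mathlib

/-!
Write `f(k₀,·) = (ρ - Tρ) · (k - i)^{-(4N+7)}`, where `Tρ` is the Taylor polynomial of `ρ` at `k₀`
of degree `4N+3`. Near `k₀`, the `j`-th derivative of `ρ - Tρ` is the Taylor remainder of `ρ⁽ʲ⁾` of
order `4N+4-j`, hence `O(|k - k₀|^{4N+4-j})` uniformly in `k₀ ∈ [0,K]` because `ρ⁽⁴ᴺ⁺⁴⁾` is bounded
on `[-1, K+1]`; all derivatives of `(k - i)^{-(4N+7)}` are bounded. Far from `k₀`, write instead
`f(k₀,·) = r - Tρ · (k - i)^{-(4N+7)}`: `r` decays like a Schwartz function, the derivatives of the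
degree-`(4N+3)` polynomial `Tρ` grow at most like `(1+|k|)^{4N+3}` and those of the weight
decay like `(1+|k|)^{-(4N+7)}`. The Leibniz rule combines the factors in both regimes.
-/

open Set

/-- `ρ(k) = (k - i)^(4N+7) r(k)` for real `k`. -/
noncomputable def rho (r : ℝ → ℂ) (N : ℕ) (k : ℝ) : ℂ :=
  ((k : ℂ) - Complex.I) ^ (4 * N + 7) * r k

/-- The weighted Taylor remainder
`f(k₀,k) = r(k) - (k-i)^{-(4N+7)} ∑_{j=0}^{4N+3} ρ⁽ʲ⁾(k₀) (k-k₀)^j / j!`. -/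
noncomputable def fTay (r : ℝ → ℂ) (N : ℕ) (k0 k : ℝ) : ℂ :=
  r k - (∑ j ∈ Finset.range (4 * N + 4),
      iteratedDeriv j (rho r N) k0 * ((k : ℂ) - (k0 : ℂ)) ^ j / (Nat.factorial j)) /
    ((k : ℂ) - Complex.I) ^ (4 * N + 7)

open scoped ContDiff

lemma iteratedDeriv_iteratedDeriv {𝕜 F : Type*} [NontriviallyNormedField 𝕜] [NormedAddCommGroup F]
    [NormedSpace 𝕜 F] (m l : ℕ) (f : 𝕜 → F) :
    iteratedDeriv m (iteratedDeriv l f) = iteratedDeriv (m + l) f := by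
  simp only [iteratedDeriv_eq_iterate, ← Function.iterate_add_apply]

lemma hasDerivAt_ofReal_sub_pow (c : ℂ) (p : ℕ) (x : ℝ) :
    HasDerivAt (fun x : ℝ => ((x : ℂ) - c) ^ p) (p * ((x : ℂ) - c) ^ (p - 1)) x := by
  simpa using (((hasDerivAt_id (x : ℂ)).sub_const c).pow p).comp_ofReal

/-- The Taylor polynomial of `h` at `x₀` of degree `< p`. -/
noncomputable def taylorPoly (h : ℝ → ℂ) (p : ℕ) (x₀ x : ℝ) : ℂ :=
  ∑ l ∈ Finset.range p, iteratedDeriv l h x₀ * ((x : ℂ) - (x₀ : ℂ)) ^ l / (Nat.factorial l)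

section TaylorPoly

variable (h : ℝ → ℂ) (x₀ : ℝ)

lemma hasDerivAt_taylorPoly_succ (p : ℕ) (x : ℝ) :
    HasDerivAt (taylorPoly h (p + 1) x₀) (taylorPoly (deriv h) p x₀ x) x := by
  have hsum := HasDerivAt.fun_sum fun l (_ : l ∈ Finset.range (p + 1)) =>
    ((hasDerivAt_ofReal_sub_pow (x₀ : ℂ) l x).const_mul (iteratedDeriv l h x₀)).div_const
      (l.factorial : ℂ)
  refine hsum.congr_deriv ?_
  rw [taylorPoly, Finset.sum_range_succ']
  simp only [Nat.cast_zero, zero_mul, mul_zero, zero_div, add_zero]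
  refine Finset.sum_congr rfl fun l _ => ?_
  rw [← iteratedDeriv_succ', Nat.factorial_succ, Nat.add_sub_cancel]
  have : (l.factorial : ℂ) ≠ 0 := by exact_mod_cast l.factorial_ne_zero
  push_cast
  field_simp

@[simp]
lemma taylorPoly_zero : taylorPoly h 0 x₀ = 0 := funext fun _ => Finset.sum_range_zero _

lemma deriv_taylorPoly (p : ℕ) : deriv (taylorPoly h p x₀) = taylorPoly (deriv h) (p - 1) x₀ := by
  cases p with
  | zero => simp
  | succ p => exact funext fun x => (hasDerivAt_taylorPoly_succ h x₀ p x).deriv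

lemma iteratedDeriv_taylorPoly (m p : ℕ) :
    iteratedDeriv m (taylorPoly h p x₀) = taylorPoly (iteratedDeriv m h) (p - m) x₀ := by
  induction m generalizing h p with
  | zero => simp
  | succ m ih => rw [iteratedDeriv_succ', deriv_taylorPoly, ih, ← iteratedDeriv_succ', Nat.sub_sub,
      Nat.add_comm 1 m]

lemma contDiff_taylorPoly {n : WithTop ℕ∞} (p : ℕ) : ContDiff ℝ n (taylorPoly h p x₀) :=
  ContDiff.sum fun l _ => ((contDiff_const.mul
    ((Complex.ofRealCLM.contDiff.sub contDiff_const).pow l)).div_const _)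

lemma taylorPoly_succ_self (p : ℕ) : taylorPoly h (p + 1) x₀ x₀ = h x₀ := by
  simp [taylorPoly, Finset.sum_range_succ']

lemma norm_taylorPoly_le {p : ℕ} {B : ℝ} (hB : ∀ l < p, ‖iteratedDeriv l h x₀‖ ≤ B) (x : ℝ) :
    ‖taylorPoly h p x₀ x‖ ≤ p * B * (1 + |x - x₀|) ^ (p - 1) := by
  have hterm : ∀ l ∈ Finset.range p, ‖iteratedDeriv l h x₀ * ((x : ℂ) - (x₀ : ℂ)) ^ l /
      (l.factorial : ℂ)‖ ≤ B * (1 + |x - x₀|) ^ (p - 1) := by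
    intro l hl
    have hlp : l ≤ p - 1 := by have := Finset.mem_range.mp hl; omega
    have hB₀ : 0 ≤ B := (norm_nonneg _).trans (hB l (Finset.mem_range.mp hl))
    rw [norm_div, norm_mul, norm_pow, ← Complex.ofReal_sub, Complex.norm_real, Real.norm_eq_abs,
      Complex.norm_natCast]
    calc ‖iteratedDeriv l h x₀‖ * |x - x₀| ^ l / l.factorial
        ≤ ‖iteratedDeriv l h x₀‖ * |x - x₀| ^ l :=
          div_le_self (by positivity) (by exact_mod_cast l.factorial_pos)
      _ ≤ B * (1 + |x - x₀|) ^ (p - 1) := by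
          gcongr
          · exact hB l (Finset.mem_range.mp hl)
          · calc |x - x₀| ^ l ≤ (1 + |x - x₀|) ^ l := by gcongr; linarith
              _ ≤ (1 + |x - x₀|) ^ (p - 1) :=
                  pow_le_pow_right₀ (by linarith [abs_nonneg (x - x₀)]) hlp
  calc ‖taylorPoly h p x₀ x‖ ≤ ∑ _l ∈ Finset.range p, B * (1 + |x - x₀|) ^ (p - 1) :=
        (norm_sum_le _ _).trans (Finset.sum_le_sum hterm)
    _ = p * B * (1 + |x - x₀|) ^ (p - 1) := by simp [mul_assoc]

lemma norm_sub_taylorPoly_le {p : ℕ} (hh : ContDiff ℝ p h) {x B : ℝ}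
    (hB : ∀ t ∈ uIcc x₀ x, ‖iteratedDeriv p h t‖ ≤ B) :
    ‖h x - taylorPoly h p x₀ x‖ ≤ B * |x - x₀| ^ p := by
  induction p generalizing h x with
  | zero => simpa using hB x right_mem_uIcc
  | succ p ih =>
    rw [Nat.cast_succ] at hh
    obtain ⟨hdiff, -, hderiv⟩ := contDiff_succ_iff_deriv.mp hh
    have hB₀ : 0 ≤ B := (norm_nonneg _).trans (hB x₀ left_mem_uIcc)
    have hrem : ∀ t ∈ uIcc x₀ x,
        ‖deriv h t - taylorPoly (deriv h) p x₀ t‖ ≤ B * |x - x₀| ^ p := by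
      intro t ht
      calc ‖deriv h t - taylorPoly (deriv h) p x₀ t‖ ≤ B * |t - x₀| ^ p :=
            ih (deriv h) hderiv fun s hs => by
              rw [← iteratedDeriv_succ']
              exact hB s (uIcc_subset_uIcc_left ht hs)
        _ ≤ B * |x - x₀| ^ p := by gcongr B * ?_ ^ p; exact abs_sub_left_of_mem_uIcc ht
    have hmvt := (convex_uIcc x₀ x).norm_image_sub_le_of_norm_hasDerivWithin_le
      (fun t _ => ((hdiff t).hasDerivAt.sub (hasDerivAt_taylorPoly_succ h x₀ p t)).hasDerivWithinAt)
      hrem left_mem_uIcc right_mem_uIcc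
    simpa [taylorPoly_succ_self, pow_succ, mul_assoc] using hmvt

lemma norm_iteratedDeriv_sub_taylorPoly_le {p j : ℕ} (hj : j ≤ p) (hh : ContDiff ℝ p h)
    {x B : ℝ} (hB : ∀ t ∈ uIcc x₀ x, ‖iteratedDeriv p h t‖ ≤ B) :
    ‖iteratedDeriv j (fun y => h y - taylorPoly h p x₀ y) x‖ ≤ B * |x - x₀| ^ (p - j) := by
  have hhj : ContDiff ℝ (p - j : ℕ) (iteratedDeriv j h) := by
    rw [iteratedDeriv_eq_iterate]
    exact ContDiff.iterate_deriv' _ _ (by rwa [Nat.sub_add_cancel hj])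
  rw [iteratedDeriv_fun_sub (hh.contDiffAt.of_le (by exact_mod_cast hj))
    (contDiff_taylorPoly _ _ _).contDiffAt, iteratedDeriv_taylorPoly]
  exact norm_sub_taylorPoly_le _ _ hhj fun t ht => by
    rw [iteratedDeriv_iteratedDeriv, Nat.sub_add_cancel hj]
    exact hB t ht

lemma norm_iteratedDeriv_taylorPoly_le {p : ℕ} {B K : ℝ}
    (hB : ∀ l < p, ‖iteratedDeriv l h x₀‖ ≤ B) (hx₀ : |x₀| ≤ K) (j : ℕ) (x : ℝ) :
    ‖iteratedDeriv j (taylorPoly h p x₀) x‖ ≤ p * B * (1 + K) ^ (p - 1) * (1 + |x|) ^ (p - 1) := by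
  obtain rfl | hp := Nat.eq_zero_or_pos p
  · simp
  have hB₀ : 0 ≤ B := (norm_nonneg _).trans (hB 0 hp)
  have hdist : 1 + |x - x₀| ≤ (1 + K) * (1 + |x|) := by
    nlinarith [abs_sub x x₀, mul_nonneg ((abs_nonneg x₀).trans hx₀) (abs_nonneg x)]
  rw [iteratedDeriv_taylorPoly, mul_assoc _ ((1 + K) ^ (p - 1)), ← mul_pow]
  calc _ ≤ (p - j : ℕ) * B * (1 + |x - x₀|) ^ (p - j - 1) :=
        norm_taylorPoly_le _ _ (fun l hl => by
          rw [iteratedDeriv_iteratedDeriv]; exact hB _ (by omega)) x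
    _ ≤ p * B * ((1 + K) * (1 + |x|)) ^ (p - 1) := by
        gcongr
        · omega
        · exact (pow_le_pow_left₀ (by positivity) hdist _).trans
            (pow_le_pow_right₀ (by nlinarith [abs_nonneg x, (abs_nonneg x₀).trans hx₀]) (by omega))

end TaylorPoly

lemma ofReal_sub_I_ne_zero (x : ℝ) : (x : ℂ) - Complex.I ≠ 0 := by
  intro h
  simpa using congrArg Complex.im h

lemma one_le_norm_ofReal_sub_I (x : ℝ) : 1 ≤ ‖(x : ℂ) - Complex.I‖ := by
  simpa using Complex.abs_im_le_norm ((x : ℂ) - Complex.I)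

lemma one_add_abs_le_two_mul_norm_ofReal_sub_I (x : ℝ) :
    1 + |x| ≤ 2 * ‖(x : ℂ) - Complex.I‖ := by
  have hre := Complex.abs_re_le_norm ((x : ℂ) - Complex.I)
  simp only [Complex.sub_re, Complex.ofReal_re, Complex.I_re, sub_zero] at hre
  linarith [one_le_norm_ofReal_sub_I x]

lemma iteratedDeriv_ofReal_sub_I_zpow (z : ℤ) (m : ℕ) :
    iteratedDeriv m (fun x : ℝ => ((x : ℂ) - Complex.I) ^ z) =
      fun x : ℝ => (∏ i ∈ Finset.range m, ((z : ℂ) - i)) * ((x : ℂ) - Complex.I) ^ (z - m) := by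
  induction m with
  | zero => simp
  | succ m ih =>
    funext x
    have hd : HasDerivAt (fun y : ℂ => (y - Complex.I) ^ (z - m))
        (((z - m : ℤ) : ℂ) * ((x : ℂ) - Complex.I) ^ (z - m - 1)) x := by
      simpa [Function.comp_def] using
        (hasDerivAt_zpow (z - m) _ (Or.inl (ofReal_sub_I_ne_zero x))).comp (x : ℂ)
          ((hasDerivAt_id (x : ℂ)).sub_const Complex.I)
    rw [iteratedDeriv_succ, ih, (hd.comp_ofReal.const_mul _).deriv, Finset.prod_range_succ,
      show z - (m : ℤ) - 1 = z - ((m + 1 : ℕ) : ℤ) by push_cast; ring]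
    push_cast
    ring

lemma norm_iteratedDeriv_ofReal_sub_I_zpow_neg_le (M : ℕ) {m n : ℕ} (hmn : m ≤ n) (x : ℝ) :
    ‖iteratedDeriv m (fun x : ℝ => ((x : ℂ) - Complex.I) ^ (-(M : ℤ))) x‖ ≤
      (M + n + 1) ^ n * 2 ^ M / (1 + |x|) ^ M := by
  rw [iteratedDeriv_ofReal_sub_I_zpow, norm_mul, norm_prod, norm_zpow]
  have hprod : ∏ i ∈ Finset.range m, ‖(((-(M : ℤ)) : ℤ) : ℂ) - i‖ ≤ ((M : ℝ) + n + 1) ^ n := by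
    calc ∏ i ∈ Finset.range m, ‖(((-(M : ℤ)) : ℤ) : ℂ) - i‖
        ≤ ∏ _i ∈ Finset.range m, ((M : ℝ) + n + 1) := by
          refine Finset.prod_le_prod (fun _ _ => norm_nonneg _) fun i hi => ?_
          have hin : (i : ℝ) ≤ n := by exact_mod_cast (Finset.mem_range.mp hi).le.trans hmn
          refine (norm_sub_le _ _).trans ?_
          simp only [Int.cast_neg, Int.cast_natCast, norm_neg, Complex.norm_natCast]
          linarith
      _ ≤ ((M : ℝ) + n + 1) ^ n := by
          rw [Finset.prod_const, Finset.card_range]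
          exact pow_le_pow_right₀ (le_add_of_nonneg_left (by positivity)) hmn
  have hpow : ‖(x : ℂ) - Complex.I‖ ^ (-(M : ℤ) - m) ≤ 2 ^ M / (1 + |x|) ^ M := by
    have hx₁ := one_le_norm_ofReal_sub_I x
    rw [show -(M : ℤ) - m = -((M + m : ℕ) : ℤ) by push_cast; ring, zpow_neg, zpow_natCast,
      ← one_div, div_le_div_iff₀ (by positivity) (by positivity), one_mul]
    calc (1 + |x|) ^ M ≤ (2 * ‖(x : ℂ) - Complex.I‖) ^ M := by
          gcongr; exact one_add_abs_le_two_mul_norm_ofReal_sub_I x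
      _ ≤ 2 ^ M * ‖(x : ℂ) - Complex.I‖ ^ (M + m) := by
          rw [mul_pow]
          gcongr
          exact Nat.le_add_right M m
  calc _ ≤ ((M : ℝ) + n + 1) ^ n * (2 ^ M / (1 + |x|) ^ M) :=
        mul_le_mul hprod hpow (by positivity) (by positivity)
    _ = _ := by ring

lemma norm_iteratedDeriv_mul_le_of_forall_le {𝕜 A : Type*} [NontriviallyNormedField 𝕜]
    [NormedRing A] [NormedAlgebra 𝕜 A] {f g : 𝕜 → A} {n : ℕ} (hf : ContDiff 𝕜 n f)
    (hg : ContDiff 𝕜 n g) {x : 𝕜} {a b : ℝ} (ha : ∀ j ≤ n, ‖iteratedDeriv j f x‖ ≤ a)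
    (hb : ∀ j ≤ n, ‖iteratedDeriv j g x‖ ≤ b) :
    ‖iteratedDeriv n (fun y => f y * g y) x‖ ≤ 2 ^ n * a * b := by
  have hleib := norm_iteratedFDeriv_mul_le hf hg x le_rfl
  simp only [norm_iteratedFDeriv_eq_norm_iteratedDeriv] at hleib
  have ha₀ : 0 ≤ a := (norm_nonneg _).trans (ha 0 (Nat.zero_le n))
  calc _ ≤ ∑ j ∈ Finset.range (n + 1), (n.choose j : ℝ) * a * b :=
        hleib.trans <| Finset.sum_le_sum fun j hj =>
          mul_le_mul (mul_le_mul_of_nonneg_left (ha j (Finset.mem_range_succ_iff.mp hj))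
            (Nat.cast_nonneg _)) (hb _ (Nat.sub_le n j)) (norm_nonneg _)
            (mul_nonneg (Nat.cast_nonneg _) ha₀)
    _ = 2 ^ n * a * b := by
        rw [← Finset.sum_mul, ← Finset.sum_mul]
        exact_mod_cast congrArg (fun c : ℕ => (c : ℝ) * a * b) (Nat.sum_range_choose n)

lemma ContDiff.exists_forall_norm_iteratedDeriv_le {𝕜 F : Type*} [NontriviallyNormedField 𝕜]
    [NormedAddCommGroup F] [NormedSpace 𝕜 F] {f : 𝕜 → F} {n : ℕ} (hf : ContDiff 𝕜 n f)
    {s : Set 𝕜} (hs : IsCompact s) : ∃ B > 0, ∀ l ≤ n, ∀ t ∈ s, ‖iteratedDeriv l f t‖ ≤ B := by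
  obtain ⟨B, hB⟩ := hs.exists_bound_of_continuousOn
    (f := fun t => ∑ l ∈ Finset.range (n + 1), ‖iteratedDeriv l f t‖)
    (continuous_finsetSum _ fun l hl => (hf.continuous_iteratedDeriv l
      (by exact_mod_cast Finset.mem_range_succ_iff.mp hl)).norm).continuousOn
  refine ⟨max B 1, by positivity, fun l hl t ht => ?_⟩
  calc ‖iteratedDeriv l f t‖ ≤ ∑ l ∈ Finset.range (n + 1), ‖iteratedDeriv l f t‖ :=
        Finset.single_le_sum (f := fun l => ‖iteratedDeriv l f t‖) (fun _ _ => norm_nonneg _)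
          (Finset.mem_range_succ_iff.mpr hl)
    _ ≤ B := (le_abs_self _).trans (by simpa using hB t ht)
    _ ≤ max B 1 := le_max_left _ _

lemma SchwartzMap.exists_one_add_abs_pow_mul_norm_iteratedDeriv_le {F : Type*}
    [NormedAddCommGroup F] [NormedSpace ℝ F] (f : SchwartzMap ℝ F) (k n : ℕ) :
    ∃ C > 0, ∀ m ≤ n, ∀ x : ℝ, (1 + |x|) ^ k * ‖iteratedDeriv m f x‖ ≤ C := by
  refine ⟨2 ^ k * (Finset.Iic (k, n)).sup (fun m => SchwartzMap.seminorm ℝ m.1 m.2) f + 1,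
    by positivity, fun m hm x => ?_⟩
  have hf := SchwartzMap.one_add_le_sup_seminorm_apply (𝕜 := ℝ) (m := (k, n)) le_rfl hm f x
  rw [norm_iteratedFDeriv_eq_norm_iteratedDeriv, Real.norm_eq_abs] at hf
  linarith

lemma contDiff_ofReal_sub_I_zpow_neg {n : WithTop ℕ∞} (M : ℕ) :
    ContDiff ℝ n (fun x : ℝ => ((x : ℂ) - Complex.I) ^ (-(M : ℤ))) := by
  simp only [zpow_neg, zpow_natCast]
  exact ((Complex.ofRealCLM.contDiff.sub contDiff_const).pow M).inv
    fun x => pow_ne_zero _ (ofReal_sub_I_ne_zero x)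

lemma contDiff_rho {r : ℝ → ℂ} {n : WithTop ℕ∞} (hr : ContDiff ℝ n r) (N : ℕ) :
    ContDiff ℝ n (rho r N) :=
  ((Complex.ofRealCLM.contDiff.sub contDiff_const).pow _).mul hr

lemma fTay_eq_mul (r : ℝ → ℂ) (N : ℕ) (k₀ : ℝ) :
    fTay r N k₀ = fun k => (rho r N k - taylorPoly (rho r N) (4 * N + 4) k₀ k) *
      ((k : ℂ) - Complex.I) ^ (-((4 * N + 7 : ℕ) : ℤ)) := by
  funext k
  have hne : ((k : ℂ) - Complex.I) ^ (4 * N + 7) ≠ 0 := pow_ne_zero _ (ofReal_sub_I_ne_zero k)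
  simp only [fTay, rho, taylorPoly, zpow_neg, zpow_natCast]
  field_simp

lemma fTay_eq_sub (r : ℝ → ℂ) (N : ℕ) (k₀ : ℝ) :
    fTay r N k₀ = fun k => r k - taylorPoly (rho r N) (4 * N + 4) k₀ k *
      ((k : ℂ) - Complex.I) ^ (-((4 * N + 7 : ℕ) : ℤ)) := by
  funext k
  simp only [fTay, taylorPoly, zpow_neg, zpow_natCast, div_eq_mul_inv]

lemma exists_norm_iteratedDeriv_fTay_le_mul_pow {r : ℝ → ℂ} (hr : ContDiff ℝ ∞ r) (N : ℕ)
    (K : ℝ) : ∃ C > 0, ∀ k₀ ∈ Icc (0 : ℝ) K, ∀ n ≤ 4 * N + 4, ∀ k : ℝ, |k - k₀| ≤ 1 →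
      ‖iteratedDeriv n (fTay r N k₀) k‖ ≤ C * |k - k₀| ^ (4 * N + 4 - n) := by
  have hρ := contDiff_rho hr N
  obtain ⟨B, hB, hρB⟩ := (contDiff_infty.1 hρ (4 * N + 4)).exists_forall_norm_iteratedDeriv_le
    (isCompact_Icc (a := -1) (b := K + 1))
  set Cw : ℝ := ((4 * N + 7 : ℕ) + (4 * N + 4 : ℕ) + 1 : ℝ) ^ (4 * N + 4) * 2 ^ (4 * N + 7)
  refine ⟨2 ^ (4 * N + 4) * B * Cw, by positivity, fun k₀ hk₀ n hn k hk => ?_⟩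
  have hsub : uIcc k₀ k ⊆ Icc (-1) (K + 1) := by
    obtain ⟨h₁, h₂⟩ := abs_le.mp hk
    exact uIcc_subset_Icc ⟨by linarith [hk₀.1], by linarith [hk₀.2]⟩
      ⟨by linarith [hk₀.1], by linarith [hk₀.2]⟩
  have hrem : ∀ j ≤ n, ‖iteratedDeriv j
      (fun x => rho r N x - taylorPoly (rho r N) (4 * N + 4) k₀ x) k‖ ≤
        B * |k - k₀| ^ (4 * N + 4 - n) := fun j hj =>
    (norm_iteratedDeriv_sub_taylorPoly_le _ _ (by omega) (contDiff_infty.1 hρ _)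
      fun t ht => hρB _ le_rfl t (hsub ht)).trans <| by
        gcongr B * ?_
        exact pow_le_pow_of_le_one (abs_nonneg _) hk (by omega)
  have hw : ∀ j ≤ n, ‖iteratedDeriv j
      (fun x : ℝ => ((x : ℂ) - Complex.I) ^ (-((4 * N + 7 : ℕ) : ℤ))) k‖ ≤ Cw := fun j hj =>
    (norm_iteratedDeriv_ofReal_sub_I_zpow_neg_le _ (hj.trans hn) k).trans
      (div_le_self (by positivity) (one_le_pow₀ (by linarith [abs_nonneg k])))
  rw [fTay_eq_mul]
  calc _ ≤ 2 ^ n * (B * |k - k₀| ^ (4 * N + 4 - n)) * Cw :=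
        norm_iteratedDeriv_mul_le_of_forall_le
          (contDiff_infty.1 (hρ.sub (contDiff_taylorPoly _ _ _)) n)
          (contDiff_ofReal_sub_I_zpow_neg _) hrem hw
    _ = 2 ^ n * B * Cw * |k - k₀| ^ (4 * N + 4 - n) := by ring
    _ ≤ 2 ^ (4 * N + 4) * B * Cw * |k - k₀| ^ (4 * N + 4 - n) := by
        gcongr
        exact one_le_two

lemma exists_norm_iteratedDeriv_fTay_le_div_pow (r : SchwartzMap ℝ ℂ) (N n₀ : ℕ) (K : ℝ) :
    ∃ C > 0, ∀ k₀ ∈ Icc (0 : ℝ) K, ∀ n ≤ n₀, ∀ k : ℝ,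
      ‖iteratedDeriv n (fTay r N k₀) k‖ ≤ C / (1 + |k|) ^ 4 := by
  have hρ := contDiff_rho (r.smooth ⊤) N
  obtain ⟨B, hB, hρB⟩ := (contDiff_infty.1 hρ (4 * N + 4)).exists_forall_norm_iteratedDeriv_le
    (isCompact_Icc (a := 0) (b := K))
  obtain ⟨Cr, hCr, hr⟩ := r.exists_one_add_abs_pow_mul_norm_iteratedDeriv_le 4 n₀
  set CP : ℝ := (4 * N + 4 : ℕ) * B * (1 + |K|) ^ (4 * N + 3)
  set Cw : ℝ := ((4 * N + 7 : ℕ) + n₀ + 1 : ℝ) ^ n₀ * 2 ^ (4 * N + 7)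
  refine ⟨Cr + 2 ^ n₀ * CP * Cw, by positivity, fun k₀ hk₀ n hn k => ?_⟩
  have hprod : ‖iteratedDeriv n (fun x => taylorPoly (rho r N) (4 * N + 4) k₀ x *
      ((x : ℂ) - Complex.I) ^ (-((4 * N + 7 : ℕ) : ℤ))) k‖ ≤ 2 ^ n₀ * CP * Cw / (1 + |k|) ^ 4 := by
    calc _ ≤ 2 ^ n * (CP * (1 + |k|) ^ (4 * N + 3)) * (Cw / (1 + |k|) ^ (4 * N + 7)) :=
          norm_iteratedDeriv_mul_le_of_forall_le (contDiff_taylorPoly _ _ _)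
            (contDiff_ofReal_sub_I_zpow_neg _)
            (fun j _ => norm_iteratedDeriv_taylorPoly_le _ _ (fun l hl => hρB l hl.le k₀ hk₀)
              ((abs_of_nonneg hk₀.1).trans_le (hk₀.2.trans (le_abs_self K))) j k)
            (fun j hj => norm_iteratedDeriv_ofReal_sub_I_zpow_neg_le _ (hj.trans hn) k)
      _ = 2 ^ n * CP * Cw / (1 + |k|) ^ 4 := by
          rw [show 4 * N + 7 = 4 * N + 3 + 4 by ring, pow_add]
          field_simp
          ring
      _ ≤ 2 ^ n₀ * CP * Cw / (1 + |k|) ^ 4 := by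
          gcongr
          exact one_le_two
  rw [fTay_eq_sub, iteratedDeriv_fun_sub (r.smooth n).contDiffAt
    ((contDiff_taylorPoly (n := n) _ _ _).mul (contDiff_ofReal_sub_I_zpow_neg _)).contDiffAt]
  calc _ ≤ Cr / (1 + |k|) ^ 4 + 2 ^ n₀ * CP * Cw / (1 + |k|) ^ 4 :=
        (norm_sub_le _ _).trans <| add_le_add
          ((le_div_iff₀' (by positivity)).mpr (hr n hn k)) hprod
    _ = _ := by rw [add_div]

theorem uniform_weighted_taylor_remainder_general
    (r : SchwartzMap ℝ ℂ) (N : ℕ) (K : ℝ) :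
    ∃ C : ℝ, 0 < C ∧
      ∀ k0 ∈ Icc (0 : ℝ) K, ∀ n : ℕ, n ≤ N + 1 → ∀ k : ℝ,
        (|k - k0| ≤ 1 →
          ‖iteratedDeriv n (fTay (fun x : ℝ => r x) N k0) k‖ ≤
            C * |k - k0| ^ (4 * N + 4 - n)) ∧
        ‖iteratedDeriv n (fTay (fun x : ℝ => r x) N k0) k‖ ≤ C / (1 + |k|) ^ 4 := by
  obtain ⟨C₁, hC₁, hnear⟩ := exists_norm_iteratedDeriv_fTay_le_mul_pow (r.smooth ⊤) N K
  obtain ⟨C₂, -, hfar⟩ := exists_norm_iteratedDeriv_fTay_le_div_pow r N (N + 1) K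
  refine ⟨max C₁ C₂, lt_max_of_lt_left hC₁, fun k₀ hk₀ n hn k => ⟨fun hk => ?_, ?_⟩⟩
  · exact (hnear k₀ hk₀ n (by omega) k hk).trans (by gcongr; exact le_max_left _ _)
  · exact (hfar k₀ hk₀ n hn k).trans (by gcongr; exact le_max_right _ _)

/-- Uniform weighted Taylor remainder (from the proof of Lemma 5.1). -/
theorem uniform_weighted_taylor_remainder
    (r : SchwartzMap ℝ ℂ) (N : ℕ) (hN : 2 ≤ N) (K : ℝ) (hK : 0 < K) :
    ∃ C : ℝ, 0 < C ∧
      ∀ k0 ∈ Icc (0 : ℝ) K, ∀ n : ℕ, n ≤ N + 1 → ∀ k : ℝ,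
        (|k - k0| ≤ 1 →
          ‖iteratedDeriv n (fTay (fun x : ℝ => r x) N k0) k‖ ≤
            C * |k - k0| ^ (4 * N + 4 - n)) ∧
        ‖iteratedDeriv n (fTay (fun x : ℝ => r x) N k0) k‖ ≤ C / (1 + |k|) ^ 4 :=
  uniform_weighted_taylor_remainder_general r N K
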